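/- Multiple robustness of the one-step functional for ψ_t: fix an integer t ≥ 1 and adopt the core setup with horizon t, with integrable observed outcomes Y₀,…,Y_t. For each k ∈ {1,…,t} and each j ∈ {k−1, k}, let Q^{j,k,m} and φ_{j,k} be the true iterated regressions and functionals, and let candidate nuisances be given: 𝒲_m-measurable p̂_m with ε ≤ p̂_m ≤ 1 a.s. (ĝ₀ ≡ 1, ĝ_m = ∏_{s=1}^m p̂_s) and, for each (j,k), bounded 𝒲_m-measurable Q̂^{j,k,m} for m = 1,…,k with Q̂^{j,k,k+1} := Y_j. Define ψ̃ := Y₀ + Σ_{k=1}^t ( φ̃_{k,k} − φ̃_{k−1,k} ) with φ̃_{j,k} := Σ_{m=1}^k 1_{B_m} ĝ_m^{−1}(Q̂^{j,k,m+1} − Q̂^{j,k,m}) + Q̂^{j,k,1}. Suppose for every k ∈ {1,…,t} there exists m₀(k) ∈ {0,…,k} such that p̂_m = p_m a.s. under P(·|B_{m−1}) for all m ≤ m₀(k), and Q̂^{j,k,m} = Q^{j,k,m} a.s. under P(·|B_{m−1}) for all m₀(k) < m ≤ k and j ∈ {k−1, k}. Then E_P[ψ̃] = ψ_t := E_P[Y₀]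 + Σ_{k=1}^t (φ_{k,k} − φ_{k−1,k}). -/

import Mathlib

/-!
Fix a pair `(j, k)` and write `R m = Q^{j,k,m}`, `R̂ m = Q̂^{j,k,m}`, `g = cumProd p`,
`ĝ = cumProd p̂`, so that `φ̃_{j,k} = oneStep B ĝ R̂ k`; by linearity it suffices to show
`E[φ̃_{j,k}] = E[R 1]`. Two identities drive the argument, for bounded `𝒲 m`-measurable `f` and
`𝒲 m`-measurable `X`:
* the tower property on `B m`: `E[1_{B m} f R (m+1)] = E[1_{B m} f R m]`;
* inverse probability weighting, because `p m` is `P(B m | 𝒲 m)` on `B (m-1)`: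
  `E[1_{B m} (g m)⁻¹ X] = E[1_{B (m-1)} (g (m-1))⁻¹ X]`.
Alternating them gives `E[1_{B n} (g n)⁻¹ R (n+1)] = E[R 1]` for every `n`. In `φ̃_{j,k}` the
summands with `m > m₀` have mean zero by the tower property, as `R̂ = R` there; for `m ≤ m₀`,
`ĝ m = g m` on `B m`, so by weighting these summands telescope to
`E[1_{B m₀} (g m₀)⁻¹ R̂ (m₀+1)] - E[R̂ 1]`, and `R̂ (m₀+1) = R (m₀+1)` on `B m₀`.
Conditioning on `B` is replaced throughout by restricting `P` to `B`, which changes conditional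
expectations only on a null set of the restriction.
-/

open MeasureTheory ProbabilityTheory
open scoped ENNReal

section CondExp

variable {Ω : Type*} {m m₀ : MeasurableSpace Ω} {μ : Measure Ω}

theorem condExp_smul_measure_ae_eq [IsFiniteMeasure μ] (hm : m ≤ m₀) {c : ℝ≥0∞} (hc₀ : c ≠ 0)
    (hc : c ≠ ∞) (f : Ω → ℝ) : (c • μ)[f|m] =ᵐ[μ] μ[f|m] := by
  have : IsFiniteMeasure (c • μ) := μ.smul_finite hc
  by_cases hf : Integrable f μ
  · refine ae_eq_condExp_of_forall_setIntegral_eq hm hf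
      (fun _ _ _ => ((integrable_smul_measure hc₀ hc).1 integrable_condExp).integrableOn)
      (fun s hs _ => ?_) stronglyMeasurable_condExp.aestronglyMeasurable
    have h := setIntegral_condExp hm ((integrable_smul_measure hc₀ hc).2 hf) hs
    rw [Measure.restrict_smul, integral_smul_measure, integral_smul_measure] at h
    exact smul_right_injective ℝ (ENNReal.toReal_ne_zero.2 ⟨hc₀, hc⟩) h
  · rw [condExp_of_not_integrable hf,
      condExp_of_not_integrable (by rwa [integrable_smul_measure hc₀ hc])]

theorem ae_cond_iff_ae_restrict [IsFiniteMeasure μ] {s : Set Ω} {φ : Ω → Prop} :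
    (∀ᵐ ω ∂μ[|s], φ ω) ↔ ∀ᵐ ω ∂μ.restrict s, φ ω :=
  Measure.ae_ennreal_smul_measure_iff (ENNReal.inv_ne_zero.2 (measure_ne_top μ s))

theorem condExp_cond_ae_eq [IsFiniteMeasure μ] (hm : m ≤ m₀) (s : Set Ω) (f : Ω → ℝ) :
    (μ[|s])[f|m] =ᵐ[μ.restrict s] (μ.restrict s)[f|m] := by
  by_cases hs : μ s = 0
  · rw [Measure.restrict_eq_zero.2 hs, ae_zero]
    exact Filter.eventually_bot
  exact condExp_smul_measure_ae_eq hm (ENNReal.inv_ne_zero.2 (measure_ne_top μ s))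
    (ENNReal.inv_ne_top.2 hs) f

theorem integral_mul_eq_of_ae_eq_condExp [IsFiniteMeasure μ] (hm : m ≤ m₀) {f R R' : Ω → ℝ}
    {C : ℝ} (hf : Measurable[m] f) (hfC : ∀ᵐ ω ∂μ, |f ω| ≤ C) (hR : Integrable R μ)
    (hR' : R' =ᵐ[μ] μ[R|m]) : ∫ ω, f ω * R' ω ∂μ = ∫ ω, f ω * R ω ∂μ := by
  have hfR : Integrable (f * R) μ := hR.bdd_mul (hf.mono hm le_rfl).aestronglyMeasurable hfC
  calc ∫ ω, f ω * R' ω ∂μ = ∫ ω, (μ[f * R|m]) ω ∂μ := by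
        refine integral_congr_ae ?_
        filter_upwards [hR', condExp_mul_of_stronglyMeasurable_left hf.stronglyMeasurable hfR hR]
          with ω h₁ h₂
        rw [h₂, h₁, Pi.mul_apply]
    _ = ∫ ω, f ω * R ω ∂μ := integral_condExp hm

theorem condExp_indicator_inv_mul_ae_eq [IsFiniteMeasure μ] {A : Set Ω}
    (hA : MeasurableSet A) {π F : Ω → ℝ} (hπm : Measurable[m] π)
    (hπ : π =ᵐ[μ] μ[A.indicator (fun _ => (1 : ℝ))|m]) (hπ₀ : ∀ᵐ ω ∂μ, π ω ≠ 0)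
    (hF : Measurable[m] F) (hint : Integrable (A.indicator fun ω => (π ω)⁻¹ * F ω) μ) :
    μ[A.indicator (fun ω => (π ω)⁻¹ * F ω)|m] =ᵐ[μ] F := by
  have hA' : A.indicator (fun ω => (π ω)⁻¹ * F ω)
      = π⁻¹ * F * A.indicator (fun _ => (1 : ℝ)) := by
    ext ω; by_cases h : ω ∈ A <;> simp [h]
  rw [hA'] at hint ⊢
  filter_upwards [condExp_mul_of_stronglyMeasurable_left (hπm.inv.mul hF).stronglyMeasurable hint
    ((integrable_const 1).indicator hA), hπ, hπ₀] with ω h h₁ h₀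
  rw [h, Pi.mul_apply, ← h₁, Pi.mul_apply, Pi.inv_apply]
  field_simp

end CondExp

theorem MeasureTheory.Integrable.inv_mul_of_le {Ω : Type*} [MeasurableSpace Ω] {μ : Measure Ω}
    {q X : Ω → ℝ} {c : ℝ} (hc : 0 < c) (hq : Measurable q) (hcq : ∀ᵐ ω ∂μ, c ≤ q ω)
    (hX : Integrable X μ) :
    Integrable (fun ω => (q ω)⁻¹ * X ω) μ := by
  refine hX.bdd_mul hq.inv.aestronglyMeasurable (c := c⁻¹) ?_
  filter_upwards [hcq] with ω h
  rw [norm_inv, Real.norm_of_nonneg (hc.le.trans h)]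
  exact inv_anti₀ hc h

theorem Finset.sum_Icc_sub_pred {M : Type*} [AddCommGroup M] (a : ℕ → M) (n : ℕ) :
    ∑ m ∈ Finset.Icc 1 n, (a m - a (m - 1)) = a n - a 0 := by
  induction n with
  | zero => simp
  | succ n ih =>
    rw [Finset.sum_Icc_succ_top (by omega), ih, Nat.add_sub_cancel, sub_add_sub_cancel']

section CumProd

variable {Ω : Type*}

def cumProd (q : ℕ → Ω → ℝ) (m : ℕ) (ω : Ω) : ℝ := ∏ s ∈ Finset.Icc 1 m, q s ω

@[simp] theorem cumProd_zero (q : ℕ → Ω → ℝ) (ω : Ω) : cumProd q 0 ω = 1 := by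
  simp [cumProd]

theorem cumProd_succ (q : ℕ → Ω → ℝ) (n : ℕ) (ω : Ω) :
    cumProd q (n + 1) ω = cumProd q n ω * q (n + 1) ω :=
  Finset.prod_Icc_succ_top (by omega) _

theorem measurable_cumProd {m : MeasurableSpace Ω} {𝒲 : ℕ → MeasurableSpace Ω}
    {q : ℕ → Ω → ℝ} {n : ℕ} (hq : ∀ s, 1 ≤ s → s ≤ n → Measurable[𝒲 s] (q s))
    (h𝒲 : ∀ s, 1 ≤ s → s ≤ n → 𝒲 s ≤ m) : Measurable[m] (cumProd q n) := by
  refine Finset.measurable_prod _ fun s hs => ?_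
  obtain ⟨h₁, h₂⟩ := Finset.mem_Icc.1 hs
  exact (hq s h₁ h₂).mono (h𝒲 s h₁ h₂) le_rfl

theorem pow_le_cumProd [MeasurableSpace Ω] {μ : Measure Ω} {ε : ℝ} (hε : 0 ≤ ε)
    {q : ℕ → Ω → ℝ} {n : ℕ}
    (hq : ∀ s, 1 ≤ s → s ≤ n → ∀ᵐ ω ∂μ, ε ≤ q s ω) : ∀ᵐ ω ∂μ, ε ^ n ≤ cumProd q n ω := by
  have hall : ∀ᵐ ω ∂μ, ∀ s ∈ Finset.Icc 1 n, ε ≤ q s ω :=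
    (Filter.eventually_all_finset _).2 fun s hs =>
      hq s (Finset.mem_Icc.1 hs).1 (Finset.mem_Icc.1 hs).2
  filter_upwards [hall] with ω hω
  calc ε ^ n = ∏ _s ∈ Finset.Icc 1 n, ε := by simp
    _ ≤ cumProd q n ω := Finset.prod_le_prod (fun _ _ => hε) hω

theorem abs_inv_cumProd_le [MeasurableSpace Ω] {μ : Measure Ω} {ε : ℝ} (hε : 0 < ε)
    {q : ℕ → Ω → ℝ} {n : ℕ} (hq : ∀ s, 1 ≤ s → s ≤ n → ∀ᵐ ω ∂μ, ε ≤ q s ω) :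
    ∀ᵐ ω ∂μ, |(cumProd q n ω)⁻¹| ≤ (ε ^ n)⁻¹ := by
  filter_upwards [pow_le_cumProd hε.le hq] with ω hω
  rw [abs_inv, abs_of_pos ((pow_pos hε n).trans_le hω)]
  exact inv_anti₀ (pow_pos hε n) hω

end CumProd

section

variable {Ω : Type*} [inst : MeasurableSpace Ω]

structure CoreSetup (P : Measure Ω) (T : ℕ) (B : ℕ → Set Ω) (𝒲 : ℕ → MeasurableSpace Ω)
    (ε : ℝ) (p : ℕ → Ω → ℝ) : Prop where
  measurableSet_B : ∀ m, m ≤ T → MeasurableSet (B m)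
  B_succ_subset : ∀ m, m < T → B (m + 1) ⊆ B m
  measure_B_zero : P (B 0) = 1
  W_le : ∀ m, 1 ≤ m → m ≤ T → 𝒲 m ≤ inst
  W_mono : ∀ m, 1 ≤ m → m < T → 𝒲 m ≤ 𝒲 (m + 1)
  ε_pos : 0 < ε
  measurable_p : ∀ m, 1 ≤ m → m ≤ T → Measurable[𝒲 m] (p m)
  p_ae_eq_condExp : ∀ m, 1 ≤ m → m ≤ T →
    p m =ᵐ[P[|B (m - 1)]] (P[|B (m - 1)])[(B m).indicator (fun _ => (1 : ℝ))|𝒲 m]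
  ε_le_p : ∀ m, 1 ≤ m → m ≤ T → ∀ᵐ ω ∂P, ε ≤ p m ω

namespace CoreSetup

variable {P : Measure Ω} {T : ℕ} {B : ℕ → Set Ω} {𝒲 : ℕ → MeasurableSpace Ω} {ε : ℝ}
  {p : ℕ → Ω → ℝ}

theorem of_le (hD : CoreSetup P T B 𝒲 ε p) {k : ℕ} (hk : k ≤ T) : CoreSetup P k B 𝒲 ε p where
  measurableSet_B m hm := hD.measurableSet_B m (hm.trans hk)
  B_succ_subset m hm := hD.B_succ_subset m (hm.trans_le hk)
  measure_B_zero := hD.measure_B_zero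
  W_le m h₁ hm := hD.W_le m h₁ (hm.trans hk)
  W_mono m h₁ hm := hD.W_mono m h₁ (hm.trans_le hk)
  ε_pos := hD.ε_pos
  measurable_p m h₁ hm := hD.measurable_p m h₁ (hm.trans hk)
  p_ae_eq_condExp m h₁ hm := hD.p_ae_eq_condExp m h₁ (hm.trans hk)
  ε_le_p m h₁ hm := hD.ε_le_p m h₁ (hm.trans hk)

theorem B_subset_B (hD : CoreSetup P T B 𝒲 ε p) {a b : ℕ} (hab : a ≤ b) (hb : b ≤ T) :
    B b ⊆ B a := by
  induction b, hab using Nat.le_induction with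
  | base => exact subset_rfl
  | succ b hab ih => exact (hD.B_succ_subset b hb).trans (ih (by omega))

theorem W_le_W (hD : CoreSetup P T B 𝒲 ε p) {a b : ℕ} (ha : 1 ≤ a) (hab : a ≤ b) (hb : b ≤ T) :
    𝒲 a ≤ 𝒲 b := by
  induction b, hab using Nat.le_induction with
  | base => exact le_rfl
  | succ b hab ih => exact (ih (by omega)).trans (hD.W_mono b (ha.trans hab) hb)

theorem restrict_B_zero [IsProbabilityMeasure P] (hD : CoreSetup P T B 𝒲 ε p) :
    P.restrict (B 0) = P :=
  Measure.restrict_eq_self_of_ae_mem <| (ae_iff_measure_eq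
    (hD.measurableSet_B 0 (Nat.zero_le T)).nullMeasurableSet).2
    (hD.measure_B_zero.trans measure_univ.symm)

theorem restrict_B_restrict_B_succ (hD : CoreSetup P T B 𝒲 ε p) {n : ℕ} (hn : n < T) :
    (P.restrict (B n)).restrict (B (n + 1)) = P.restrict (B (n + 1)) := by
  rw [Measure.restrict_restrict (hD.measurableSet_B (n + 1) hn),
    Set.inter_eq_left.2 (hD.B_succ_subset n hn)]

theorem ae_restrict_of_ae_cond [IsFiniteMeasure P] (hD : CoreSetup P T B 𝒲 ε p) {a b : ℕ}
    (hab : a ≤ b) (hb : b ≤ T) {φ : Ω → Prop} (h : ∀ᵐ ω ∂P[|B a], φ ω) :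
    ∀ᵐ ω ∂P.restrict (B b), φ ω :=
  ae_restrict_of_ae_restrict_of_subset (hD.B_subset_B hab hb) (ae_cond_iff_ae_restrict.1 h)

theorem measurable_cumProd_of_le (hD : CoreSetup P T B 𝒲 ε p) {q : ℕ → Ω → ℝ}
    (hq : ∀ m, 1 ≤ m → m ≤ T → Measurable[𝒲 m] (q m)) {n m : ℕ} (hnm : n ≤ m) (hm : m ≤ T) :
    Measurable[𝒲 m] (cumProd q n) :=
  measurable_cumProd (fun s h₁ h₂ => hq s h₁ (by omega))
    fun s h₁ h₂ => hD.W_le_W h₁ (h₂.trans hnm) hm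

theorem integrableOn_inv_cumProd_mul (hD : CoreSetup P T B 𝒲 ε p) {q : ℕ → Ω → ℝ}
    (hq : ∀ m, 1 ≤ m → m ≤ T → Measurable[𝒲 m] (q m))
    (hεq : ∀ m, 1 ≤ m → m ≤ T → ∀ᵐ ω ∂P, ε ≤ q m ω) {n : ℕ} (hn : n ≤ T) {s : Set Ω}
    {X : Ω → ℝ} (hX : IntegrableOn X s P) :
    IntegrableOn (fun ω => (cumProd q n ω)⁻¹ * X ω) s P :=
  Integrable.inv_mul_of_le (pow_pos hD.ε_pos n)
    (measurable_cumProd (fun m h₁ h₂ => hq m h₁ (h₂.trans hn))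
      fun m h₁ h₂ => hD.W_le m h₁ (h₂.trans hn))
    (ae_restrict_of_ae (pow_le_cumProd hD.ε_pos.le fun m h₁ h₂ => hεq m h₁ (h₂.trans hn))) hX

theorem condExp_ipw_ae_eq [IsFiniteMeasure P] (hD : CoreSetup P T B 𝒲 ε p) {n : ℕ} (hn : n < T)
    {F : Ω → ℝ} (hF : Measurable[𝒲 (n + 1)] F)
    (hint : IntegrableOn (fun ω => (p (n + 1) ω)⁻¹ * F ω) (B (n + 1)) P) :
    (P.restrict (B n))[(B (n + 1)).indicator (fun ω => (p (n + 1) ω)⁻¹ * F ω)|𝒲 (n + 1)]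
      =ᵐ[P.restrict (B n)] F := by
  have hp := hD.p_ae_eq_condExp (n + 1) (by omega) hn
  rw [Nat.add_sub_cancel] at hp
  refine condExp_indicator_inv_mul_ae_eq (hD.measurableSet_B (n + 1) hn)
    (hD.measurable_p (n + 1) (by omega) hn)
    (Filter.EventuallyEq.trans (ae_cond_iff_ae_restrict.1 hp)
      (condExp_cond_ae_eq (hD.W_le (n + 1) (by omega) hn) _ _))
    ?_ hF ?_
  · filter_upwards [ae_restrict_of_ae (hD.ε_le_p (n + 1) (by omega) hn)] with ω h
    exact (hD.ε_pos.trans_le h).ne'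
  · rwa [integrable_indicator_iff (hD.measurableSet_B (n + 1) hn), IntegrableOn,
      hD.restrict_B_restrict_B_succ hn]

theorem integrableOn_inv_p_mul (hD : CoreSetup P T B 𝒲 ε p) {n : ℕ} (hn : n < T) {s : Set Ω}
    {X : Ω → ℝ} (hX : IntegrableOn X s P) :
    IntegrableOn (fun ω => (p (n + 1) ω)⁻¹ * X ω) s P :=
  Integrable.inv_mul_of_le hD.ε_pos
    ((hD.measurable_p (n + 1) (by omega) hn).mono (hD.W_le (n + 1) (by omega) hn) le_rfl)
    (ae_restrict_of_ae (hD.ε_le_p (n + 1) (by omega) hn)) hX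

theorem integrableOn_of_integrableOn_succ [IsFiniteMeasure P] (hD : CoreSetup P T B 𝒲 ε p)
    {n : ℕ} (hn : n < T) {X : Ω → ℝ} (hX : Measurable[𝒲 (n + 1)] X)
    (hXi : IntegrableOn X (B (n + 1)) P) : IntegrableOn X (B n) P :=
  integrable_condExp.congr (hD.condExp_ipw_ae_eq hn hX (hD.integrableOn_inv_p_mul hn hXi))

theorem setIntegral_inv_cumProd_succ [IsFiniteMeasure P] (hD : CoreSetup P T B 𝒲 ε p) {n : ℕ}
    (hn : n < T) {X : Ω → ℝ} (hX : Measurable[𝒲 (n + 1)] X) (hXi : IntegrableOn X (B n) P) :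
    ∫ ω in B (n + 1), (cumProd p (n + 1) ω)⁻¹ * X ω ∂P
      = ∫ ω in B n, (cumProd p n ω)⁻¹ * X ω ∂P := by
  set F := fun ω => (cumProd p n ω)⁻¹ * X ω
  have hF : Measurable[𝒲 (n + 1)] F :=
    (hD.measurable_cumProd_of_le hD.measurable_p n.le_succ hn).inv.mul hX
  have hFi : IntegrableOn F (B (n + 1)) P :=
    (hD.integrableOn_inv_cumProd_mul hD.measurable_p hD.ε_le_p hn.le hXi).mono_set
      (hD.B_succ_subset n hn)
  set G := (B (n + 1)).indicator fun ω => (p (n + 1) ω)⁻¹ * F ω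
  calc ∫ ω in B (n + 1), (cumProd p (n + 1) ω)⁻¹ * X ω ∂P = ∫ ω, G ω ∂P.restrict (B n) := by
        rw [integral_indicator (hD.measurableSet_B (n + 1) hn), hD.restrict_B_restrict_B_succ hn]
        simp only [F, cumProd_succ, mul_inv, mul_assoc, mul_comm (p (n + 1) _)⁻¹]
    _ = ∫ ω, (P.restrict (B n))[G|𝒲 (n + 1)] ω ∂P.restrict (B n) :=
        (integral_condExp (hD.W_le (n + 1) (by omega) hn)).symm
    _ = ∫ ω in B n, F ω ∂P :=
        integral_congr_ae (hD.condExp_ipw_ae_eq hn hF (hD.integrableOn_inv_p_mul hn hFi))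

end CoreSetup

end

section IteratedRegression

variable {Ω : Type*} [inst : MeasurableSpace Ω]

structure IsIteratedRegression (P : Measure Ω) (T : ℕ) (B : ℕ → Set Ω)
    (𝒲 : ℕ → MeasurableSpace Ω) (R : ℕ → Ω → ℝ) : Prop where
  integrable_top : Integrable (R (T + 1)) P
  measurable : ∀ m, 1 ≤ m → m ≤ T → Measurable[𝒲 m] (R m)
  ae_eq_condExp : ∀ m, 1 ≤ m → m ≤ T → R m =ᵐ[P[|B m]] (P[|B m])[R (m + 1)|𝒲 m]

namespace IsIteratedRegression

variable {P : Measure Ω} {T : ℕ} {B : ℕ → Set Ω}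
  {𝒲 : ℕ → MeasurableSpace Ω} {ε : ℝ} {p R : ℕ → Ω → ℝ}

theorem ae_eq_condExp_restrict [IsFiniteMeasure P] (hD : CoreSetup P T B 𝒲 ε p)
    (hR : IsIteratedRegression P T B 𝒲 R) {m : ℕ} (h₁ : 1 ≤ m) (hm : m ≤ T) :
    R m =ᵐ[P.restrict (B m)] (P.restrict (B m))[R (m + 1)|𝒲 m] :=
  Filter.EventuallyEq.trans (ae_cond_iff_ae_restrict.1 (hR.ae_eq_condExp m h₁ hm))
    (condExp_cond_ae_eq (hD.W_le m h₁ hm) _ _)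

theorem integrableOn [IsFiniteMeasure P] (hD : CoreSetup P T B 𝒲 ε p)
    (hR : IsIteratedRegression P T B 𝒲 R) {n : ℕ} (hn : n ≤ T) :
    IntegrableOn (R (n + 1)) (B n) P := by
  rcases hn.lt_or_eq with hn | rfl
  · exact hD.integrableOn_of_integrableOn_succ hn (hR.measurable (n + 1) (by omega) hn)
      (integrable_condExp.congr (hR.ae_eq_condExp_restrict hD (by omega) hn).symm)
  · exact hR.integrable_top.integrableOn

theorem setIntegral_mul_succ [IsFiniteMeasure P] (hD : CoreSetup P T B 𝒲 ε p)
    (hR : IsIteratedRegression P T B 𝒲 R) {n : ℕ} (h₁ : 1 ≤ n) (hn : n ≤ T) {f : Ω → ℝ} {C : ℝ}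
    (hf : Measurable[𝒲 n] f)
    (hfC : ∀ᵐ ω ∂P, |f ω| ≤ C) :
    ∫ ω in B n, f ω * R (n + 1) ω ∂P = ∫ ω in B n, f ω * R n ω ∂P :=
  (integral_mul_eq_of_ae_eq_condExp (hD.W_le n h₁ hn) hf (ae_restrict_of_ae hfC)
    (hR.integrableOn hD hn) (hR.ae_eq_condExp_restrict hD h₁ hn)).symm

theorem setIntegral_inv_cumProd [IsProbabilityMeasure P] (hD : CoreSetup P T B 𝒲 ε p)
    (hR : IsIteratedRegression P T B 𝒲 R) {n : ℕ} (hn : n ≤ T) :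
    ∫ ω in B n, (cumProd p n ω)⁻¹ * R (n + 1) ω ∂P = ∫ ω, R 1 ω ∂P := by
  induction n with
  | zero => simp [hD.restrict_B_zero]
  | succ n ih =>
    rw [hR.setIntegral_mul_succ hD (by omega) hn (f := fun ω => (cumProd p (n + 1) ω)⁻¹)
        (hD.measurable_cumProd_of_le hD.measurable_p le_rfl hn).inv
        (abs_inv_cumProd_le hD.ε_pos fun m h₁ h₂ => hD.ε_le_p m h₁ (h₂.trans hn)),
      hD.setIntegral_inv_cumProd_succ hn (hR.measurable (n + 1) (by omega) hn)
        (hR.integrableOn hD (by omega))]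
    exact ih (by omega)

end IsIteratedRegression

end IteratedRegression

section OneStep

variable {Ω : Type*} [inst : MeasurableSpace Ω]

noncomputable def oneStep (B : ℕ → Set Ω) (g Qhat : ℕ → Ω → ℝ) (k : ℕ) (ω : Ω) : ℝ :=
  (∑ m ∈ Finset.Icc 1 k, (B m).indicator
    (fun ω' => (g m ω')⁻¹ * (Qhat (m + 1) ω' - Qhat m ω')) ω) + Qhat 1 ω

structure NuisanceFit (P : Measure Ω) (T : ℕ) (B : ℕ → Set Ω) (𝒲 : ℕ → MeasurableSpace Ω)
    (ε : ℝ) (p R : ℕ → Ω → ℝ) (m₀ : ℕ) (phat Rhat : ℕ → Ω → ℝ) : Prop where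
  measurable_phat : ∀ m, 1 ≤ m → m ≤ T → Measurable[𝒲 m] (phat m)
  ε_le_phat : ∀ m, 1 ≤ m → m ≤ T → ∀ᵐ ω ∂P, ε ≤ phat m ω
  measurable_Rhat : ∀ m, 1 ≤ m → m ≤ T → Measurable[𝒲 m] (Rhat m)
  bounded_Rhat : ∀ m, 1 ≤ m → m ≤ T → ∃ C, ∀ ω, |Rhat m ω| ≤ C
  Rhat_top : Rhat (T + 1) = R (T + 1)
  m₀_le : m₀ ≤ T
  phat_ae_eq : ∀ m, 1 ≤ m → m ≤ m₀ → phat m =ᵐ[P[|B (m - 1)]] p m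
  Rhat_ae_eq : ∀ m, m₀ < m → m ≤ T → Rhat m =ᵐ[P[|B (m - 1)]] R m

namespace NuisanceFit

variable {P : Measure Ω} {T : ℕ} {B : ℕ → Set Ω} {𝒲 : ℕ → MeasurableSpace Ω} {ε : ℝ}
  {p R : ℕ → Ω → ℝ} {m₀ : ℕ} {phat Rhat : ℕ → Ω → ℝ}

theorem integrable_Rhat [IsFiniteMeasure P] (hD : CoreSetup P T B 𝒲 ε p)
    (hR : IsIteratedRegression P T B 𝒲 R) (hN : NuisanceFit P T B 𝒲 ε p R m₀ phat Rhat) {m : ℕ}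
    (h₁ : 1 ≤ m) (hm : m ≤ T + 1) :
    Integrable (Rhat m) P := by
  rcases hm.lt_or_eq with hm | rfl
  · obtain ⟨C, hC⟩ := hN.bounded_Rhat m h₁ (by omega)
    exact Integrable.of_bound ((hN.measurable_Rhat m h₁ (by omega)).mono
      (hD.W_le m h₁ (by omega)) le_rfl).aestronglyMeasurable C (ae_of_all _ hC)
  · exact hN.Rhat_top ▸ hR.integrable_top

theorem Rhat_succ_ae_eq [IsFiniteMeasure P] (hD : CoreSetup P T B 𝒲 ε p)
    (hN : NuisanceFit P T B 𝒲 ε p R m₀ phat Rhat) {n : ℕ} (hn₀ : m₀ ≤ n) (hn : n ≤ T) :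
    Rhat (n + 1) =ᵐ[P.restrict (B n)] R (n + 1) := by
  rcases hn.lt_or_eq with hn | rfl
  · have h := hN.Rhat_ae_eq (n + 1) (by omega) hn
    rw [Nat.add_sub_cancel] at h
    exact hD.ae_restrict_of_ae_cond le_rfl hn.le h
  · rw [hN.Rhat_top]

theorem cumProd_phat_ae_eq [IsFiniteMeasure P] (hD : CoreSetup P T B 𝒲 ε p)
    (hN : NuisanceFit P T B 𝒲 ε p R m₀ phat Rhat) {n : ℕ} (hn : n ≤ m₀) :
    ∀ᵐ ω ∂P.restrict (B n), cumProd phat n ω = cumProd p n ω := by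
  have hall : ∀ᵐ ω ∂P.restrict (B n), ∀ s ∈ Finset.Icc 1 n, phat s ω = p s ω :=
    (Filter.eventually_all_finset _).2 fun s hs => by
      obtain ⟨h₁, h₂⟩ := Finset.mem_Icc.1 hs
      exact hD.ae_restrict_of_ae_cond (by omega) (hn.trans hN.m₀_le)
        (hN.phat_ae_eq s h₁ (h₂.trans hn))
  filter_upwards [hall] with ω hω
  exact Finset.prod_congr rfl hω

theorem integrable_indicator_term [IsFiniteMeasure P] (hD : CoreSetup P T B 𝒲 ε p)
    (hR : IsIteratedRegression P T B 𝒲 R) (hN : NuisanceFit P T B 𝒲 ε p R m₀ phat Rhat) {m : ℕ}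
    (h₁ : 1 ≤ m) (hm : m ≤ T) :
    Integrable ((B m).indicator
      fun ω => (cumProd phat m ω)⁻¹ * (Rhat (m + 1) ω - Rhat m ω)) P :=
  (integrable_indicator_iff (hD.measurableSet_B m hm)).2 <|
    hD.integrableOn_inv_cumProd_mul hN.measurable_phat hN.ε_le_phat hm
      ((hN.integrable_Rhat hD hR (by omega) (by omega)).sub
        (hN.integrable_Rhat hD hR h₁ (by omega))).integrableOn

theorem integrable_oneStep [IsFiniteMeasure P] (hD : CoreSetup P T B 𝒲 ε p)
    (hR : IsIteratedRegression P T B 𝒲 R) (hN : NuisanceFit P T B 𝒲 ε p R m₀ phat Rhat) :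
    Integrable (oneStep B (cumProd phat) Rhat T) P :=
  (integrable_finsetSum _ fun m hm => hN.integrable_indicator_term hD hR
    (Finset.mem_Icc.1 hm).1 (Finset.mem_Icc.1 hm).2).add
    (hN.integrable_Rhat hD hR le_rfl (by omega))

theorem setIntegral_term_eq_zero [IsFiniteMeasure P] (hD : CoreSetup P T B 𝒲 ε p)
    (hR : IsIteratedRegression P T B 𝒲 R) (hN : NuisanceFit P T B 𝒲 ε p R m₀ phat Rhat) {m : ℕ}
    (hm₀ : m₀ < m) (hm : m ≤ T) :
    ∫ ω in B m, (cumProd phat m ω)⁻¹ * (Rhat (m + 1) ω - Rhat m ω) ∂P = 0 := by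
  have h₁ : 1 ≤ m := by omega
  have hRm : Rhat m =ᵐ[P.restrict (B m)] R m :=
    hD.ae_restrict_of_ae_cond (Nat.sub_le m 1) hm (hN.Rhat_ae_eq m hm₀ hm)
  have hRm₁ := hN.Rhat_succ_ae_eq hD hm₀.le hm
  have hint₁ := hD.integrableOn_inv_cumProd_mul hN.measurable_phat hN.ε_le_phat hm
    (hR.integrableOn hD hm)
  have hint₀ := hD.integrableOn_inv_cumProd_mul hN.measurable_phat hN.ε_le_phat hm
    ((hN.integrable_Rhat hD hR h₁ (by omega)).integrableOn.congr hRm)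
  calc ∫ ω in B m, (cumProd phat m ω)⁻¹ * (Rhat (m + 1) ω - Rhat m ω) ∂P
      = ∫ ω in B m, ((cumProd phat m ω)⁻¹ * R (m + 1) ω - (cumProd phat m ω)⁻¹ * R m ω) ∂P := by
        refine integral_congr_ae ?_
        filter_upwards [hRm, hRm₁] with ω h h'
        rw [h, h', mul_sub]
    _ = 0 := by
      rw [integral_sub hint₁ hint₀,
        hR.setIntegral_mul_succ hD h₁ hm (f := fun ω => (cumProd phat m ω)⁻¹)
        (hD.measurable_cumProd_of_le hN.measurable_phat le_rfl hm).inv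
        (abs_inv_cumProd_le hD.ε_pos fun s h₁ h₂ => hN.ε_le_phat s h₁ (h₂.trans hm)), sub_self]

theorem setIntegral_term_eq_sub [IsFiniteMeasure P] (hD : CoreSetup P T B 𝒲 ε p)
    (hR : IsIteratedRegression P T B 𝒲 R) (hN : NuisanceFit P T B 𝒲 ε p R m₀ phat Rhat) {n : ℕ}
    (hn : n < m₀) :
    ∫ ω in B (n + 1), (cumProd phat (n + 1) ω)⁻¹ * (Rhat (n + 1 + 1) ω - Rhat (n + 1) ω) ∂P
      = ∫ ω in B (n + 1), (cumProd p (n + 1) ω)⁻¹ * Rhat (n + 1 + 1) ω ∂P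
        - ∫ ω in B n, (cumProd p n ω)⁻¹ * Rhat (n + 1) ω ∂P := by
  have hnT : n + 1 ≤ T := by have := hN.m₀_le; omega
  have hint : ∀ m, 1 ≤ m → m ≤ T + 1 → IntegrableOn
      (fun ω => (cumProd p (n + 1) ω)⁻¹ * Rhat m ω) (B (n + 1)) P := fun m h₁ hm =>
    hD.integrableOn_inv_cumProd_mul hD.measurable_p hD.ε_le_p hnT
      (hN.integrable_Rhat hD hR h₁ hm).integrableOn
  rw [← hD.setIntegral_inv_cumProd_succ hnT (hN.measurable_Rhat (n + 1) (by omega) hnT)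
    (hN.integrable_Rhat hD hR (by omega) (by omega)).integrableOn,
    ← integral_sub (hint _ (by omega) (by omega)) (hint _ (by omega) (by omega))]
  refine integral_congr_ae ?_
  filter_upwards [hN.cumProd_phat_ae_eq hD hn] with ω h
  rw [h, mul_sub]

theorem integral_oneStep [IsProbabilityMeasure P] (hD : CoreSetup P T B 𝒲 ε p)
    (hR : IsIteratedRegression P T B 𝒲 R) (hN : NuisanceFit P T B 𝒲 ε p R m₀ phat Rhat) :
    ∫ ω, oneStep B (cumProd phat) Rhat T ω ∂P = ∫ ω, R 1 ω ∂P := by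
  set a : ℕ → ℝ := fun n => ∫ ω in B n, (cumProd p n ω)⁻¹ * Rhat (n + 1) ω ∂P
  have hterm : ∀ m ∈ Finset.Icc 1 T, Integrable ((B m).indicator
      fun ω => (cumProd phat m ω)⁻¹ * (Rhat (m + 1) ω - Rhat m ω)) P := fun m hm =>
    hN.integrable_indicator_term hD hR (Finset.mem_Icc.1 hm).1 (Finset.mem_Icc.1 hm).2
  have hsplit : ∫ ω, oneStep B (cumProd phat) Rhat T ω ∂P
      = ∑ m ∈ Finset.Icc 1 T,
          ∫ ω in B m, (cumProd phat m ω)⁻¹ * (Rhat (m + 1) ω - Rhat m ω) ∂P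
        + ∫ ω, Rhat 1 ω ∂P := by
    simp only [oneStep]
    rw [integral_add (integrable_finsetSum _ hterm) (hN.integrable_Rhat hD hR le_rfl (by omega)),
      integral_finsetSum _ hterm]
    refine congrArg (· + _) (Finset.sum_congr rfl fun m hm => ?_)
    exact integral_indicator (hD.measurableSet_B m (Finset.mem_Icc.1 hm).2)
  have hvanish : ∑ m ∈ Finset.Icc 1 T,
        ∫ ω in B m, (cumProd phat m ω)⁻¹ * (Rhat (m + 1) ω - Rhat m ω) ∂P
      = ∑ m ∈ Finset.Icc 1 m₀,
        ∫ ω in B m, (cumProd phat m ω)⁻¹ * (Rhat (m + 1) ω - Rhat m ω) ∂P := by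
    refine (Finset.sum_subset (Finset.Icc_subset_Icc_right hN.m₀_le) fun m hm hm₀ => ?_).symm
    simp only [Finset.mem_Icc, not_and, not_le] at hm hm₀
    exact hN.setIntegral_term_eq_zero hD hR (hm₀ hm.1) hm.2
  have htelescope : ∀ m ∈ Finset.Icc 1 m₀,
      ∫ ω in B m, (cumProd phat m ω)⁻¹ * (Rhat (m + 1) ω - Rhat m ω) ∂P = a m - a (m - 1) := by
    intro m hm
    obtain ⟨h₁, hm⟩ := Finset.mem_Icc.1 hm
    obtain ⟨n, rfl⟩ : ∃ n, m = n + 1 := ⟨m - 1, by omega⟩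
    simp only [a, Nat.add_sub_cancel]
    exact hN.setIntegral_term_eq_sub hD hR (by omega)
  have ha₀ : a 0 = ∫ ω, Rhat 1 ω ∂P := by simp [a, hD.restrict_B_zero]
  have ha : a m₀ = ∫ ω, R 1 ω ∂P := by
    refine Eq.trans ?_ (hR.setIntegral_inv_cumProd hD hN.m₀_le)
    refine integral_congr_ae ?_
    filter_upwards [hN.Rhat_succ_ae_eq hD le_rfl hN.m₀_le] with ω h
    rw [h]
  rw [hsplit, hvanish, Finset.sum_congr rfl htelescope, Finset.sum_Icc_sub_pred, ha₀, ha,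
    sub_add_cancel]

end NuisanceFit

end OneStep

theorem multiple_robustness_psi_general
    {Ω : Type*} [inst : MeasurableSpace Ω] (P : Measure Ω) [IsProbabilityMeasure P]
    (t : ℕ)
    (B : ℕ → Set Ω)
    (hBmeas : ∀ m, m ≤ t → MeasurableSet (B m))
    (hBmono : ∀ m, m < t → B (m + 1) ⊆ B m)
    (hB0 : P (B 0) = 1)
    (𝒲 : ℕ → MeasurableSpace Ω)
    (h𝒲le : ∀ m, 1 ≤ m → m ≤ t → 𝒲 m ≤ inst)
    (h𝒲mono : ∀ m, 1 ≤ m → m < t → 𝒲 m ≤ 𝒲 (m + 1))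
    (ε : ℝ) (hε : 0 < ε)
    (p : ℕ → Ω → ℝ)
    (hpmeas : ∀ m, 1 ≤ m → m ≤ t → Measurable[𝒲 m] (p m))
    (hpver : ∀ m, 1 ≤ m → m ≤ t →
      p m =ᵐ[P[|B (m - 1)]] (P[|B (m - 1)])[(B m).indicator (fun _ => (1 : ℝ))|𝒲 m])
    (hppos : ∀ m, 1 ≤ m → m ≤ t → ∀ᵐ ω ∂P, ε ≤ p m ω)
    (Y : ℕ → Ω → ℝ)
    (hYint : ∀ s, s ≤ t → Integrable (Y s) P)
    (Q : ℕ → ℕ → ℕ → Ω → ℝ)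
    (hQtop : ∀ k, 1 ≤ k → k ≤ t → ∀ j, (j = k - 1 ∨ j = k) → Q j k (k + 1) = Y j)
    (hQmeas : ∀ k, 1 ≤ k → k ≤ t → ∀ j, (j = k - 1 ∨ j = k) →
      ∀ m, 1 ≤ m → m ≤ k → Measurable[𝒲 m] (Q j k m))
    (hQver : ∀ k, 1 ≤ k → k ≤ t → ∀ j, (j = k - 1 ∨ j = k) →
      ∀ m, 1 ≤ m → m ≤ k → Q j k m =ᵐ[P[|B m]] (P[|B m])[Q j k (m + 1)|𝒲 m])
    (phat : ℕ → Ω → ℝ)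
    (hphatmeas : ∀ m, 1 ≤ m → m ≤ t → Measurable[𝒲 m] (phat m))
    (hphatbd : ∀ m, 1 ≤ m → m ≤ t → ∀ᵐ ω ∂P, ε ≤ phat m ω ∧ phat m ω ≤ 1)
    (ghat : ℕ → Ω → ℝ)
    (hghat : ∀ m ω, ghat m ω = ∏ s ∈ Finset.Icc 1 m, phat s ω)
    (Qhat : ℕ → ℕ → ℕ → Ω → ℝ)
    (hQhattop : ∀ k, 1 ≤ k → k ≤ t → ∀ j, (j = k - 1 ∨ j = k) → Qhat j k (k + 1) = Y j)
    (hQhatmeas : ∀ k, 1 ≤ k → k ≤ t → ∀ j, (j = k - 1 ∨ j = k) →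
      ∀ m, 1 ≤ m → m ≤ k → Measurable[𝒲 m] (Qhat j k m))
    (hQhatbd : ∀ k, 1 ≤ k → k ≤ t → ∀ j, (j = k - 1 ∨ j = k) →
      ∀ m, 1 ≤ m → m ≤ k → ∃ C, ∀ ω, |Qhat j k m ω| ≤ C)
    (m₀ : ℕ → ℕ) (hm₀ : ∀ k, 1 ≤ k → k ≤ t → m₀ k ≤ k)
    (hpcorrect : ∀ k, 1 ≤ k → k ≤ t →
      ∀ m, 1 ≤ m → m ≤ m₀ k → phat m =ᵐ[P[|B (m - 1)]] p m)
    (hQcorrect : ∀ k, 1 ≤ k → k ≤ t → ∀ j, (j = k - 1 ∨ j = k) →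
      ∀ m, m₀ k < m → m ≤ k → Qhat j k m =ᵐ[P[|B (m - 1)]] Q j k m) :
    ∫ ω, (Y 0 ω + ∑ k ∈ Finset.Icc 1 t,
        (((∑ m ∈ Finset.Icc 1 k, (B m).indicator
            (fun ω' => (ghat m ω')⁻¹ * (Qhat k k (m + 1) ω' - Qhat k k m ω')) ω)
          + Qhat k k 1 ω)
        - ((∑ m ∈ Finset.Icc 1 k, (B m).indicator
            (fun ω' => (ghat m ω')⁻¹ * (Qhat (k - 1) k (m + 1) ω' - Qhat (k - 1) k m ω')) ω)
          + Qhat (k - 1) k 1 ω))) ∂P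
    = (∫ ω, Y 0 ω ∂P)
      + ∑ k ∈ Finset.Icc 1 t, ((∫ ω, Q k k 1 ω ∂P) - ∫ ω, Q (k - 1) k 1 ω ∂P) := by
  have hD : CoreSetup P t B 𝒲 ε p :=
    ⟨hBmeas, hBmono, hB0, h𝒲le, h𝒲mono, hε, hpmeas, hpver, hppos⟩
  obtain rfl : ghat = cumProd phat := funext fun m => funext (hghat m)
  have hpair : ∀ k ∈ Finset.Icc 1 t, ∀ j, (j = k - 1 ∨ j = k) →
      Integrable (oneStep B (cumProd phat) (Qhat j k) k) P ∧
        ∫ ω, oneStep B (cumProd phat) (Qhat j k) k ω ∂P = ∫ ω, Q j k 1 ω ∂P := by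
    intro k hk j hj
    obtain ⟨hk₁, hkt⟩ := Finset.mem_Icc.1 hk
    have hR : IsIteratedRegression P k B 𝒲 (Q j k) :=
      ⟨hQtop k hk₁ hkt j hj ▸ hYint j (by omega), hQmeas k hk₁ hkt j hj, hQver k hk₁ hkt j hj⟩
    have hN : NuisanceFit P k B 𝒲 ε p (Q j k) (m₀ k) phat (Qhat j k) :=
      ⟨fun m h₁ hm => hphatmeas m h₁ (hm.trans hkt),
        fun m h₁ hm => (hphatbd m h₁ (hm.trans hkt)).mono fun _ h => h.1,
        hQhatmeas k hk₁ hkt j hj, hQhatbd k hk₁ hkt j hj,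
        (hQhattop k hk₁ hkt j hj).trans (hQtop k hk₁ hkt j hj).symm, hm₀ k hk₁ hkt,
        hpcorrect k hk₁ hkt, hQcorrect k hk₁ hkt j hj⟩
    exact ⟨hN.integrable_oneStep (hD.of_le hkt) hR, hN.integral_oneStep (hD.of_le hkt) hR⟩
  have hint : ∀ k ∈ Finset.Icc 1 t, Integrable (fun ω =>
      oneStep B (cumProd phat) (Qhat k k) k ω - oneStep B (cumProd phat) (Qhat (k - 1) k) k ω) P :=
    fun k hk => (hpair k hk k (Or.inr rfl)).1.sub (hpair k hk (k - 1) (Or.inl rfl)).1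
  change ∫ ω, (Y 0 ω + ∑ k ∈ Finset.Icc 1 t, (oneStep B (cumProd phat) (Qhat k k) k ω
    - oneStep B (cumProd phat) (Qhat (k - 1) k) k ω)) ∂P = _
  rw [integral_add (hYint 0 (Nat.zero_le t)) (integrable_finsetSum _ hint),
    integral_finsetSum _ hint]
  refine congrArg _ (Finset.sum_congr rfl fun k hk => ?_)
  rw [integral_sub (hpair k hk k (Or.inr rfl)).1 (hpair k hk (k - 1) (Or.inl rfl)).1,
    (hpair k hk k (Or.inr rfl)).2, (hpair k hk (k - 1) (Or.inl rfl)).2]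

/-- Multiple robustness of the one-step functional for `ψ_t`: under the
core setup with horizon `t`, integrable observed outcomes `Y 0, …, Y t`, the true
recursions `Q j k m` (for `k ∈ {1,…,t}`, `j ∈ {k-1,k}`) with functionals
`φ_{j,k} = E_P[Q j k 1]`, and candidate nuisances `phat` (with `ε ≤ phat m ≤ 1` a.s.,
cumulative products `ghat`) and bounded `Qhat j k m` (with `Qhat j k (k+1) = Y j`):
if for each `k` there is `m₀ k ∈ {0,…,k}` with `phat m = p m` a.s. under `P[|B (m-1)]`
for all `m ≤ m₀ k`, and `Qhat j k m = Q j k m` a.s. under `P[|B (m-1)]` for all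
`m₀ k < m ≤ k`, `j ∈ {k-1,k}`, then `E_P[ψ̃] = ψ_t`, where
`ψ̃ = Y 0 + Σ_{k=1}^t (φ̃_{k,k} - φ̃_{k-1,k})`,
`φ̃_{j,k} = Σ_{m=1}^k 1_{B m} (ghat m)⁻¹ (Qhat j k (m+1) - Qhat j k m) + Qhat j k 1`,
and `ψ_t = E_P[Y 0] + Σ_{k=1}^t (φ_{k,k} - φ_{k-1,k})`. -/
theorem multiple_robustness_psi
    {Ω : Type*} [inst : MeasurableSpace Ω] (P : Measure Ω) [IsProbabilityMeasure P]
    (t : ℕ) (ht : 1 ≤ t)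
    (B : ℕ → Set Ω)
    (hBmeas : ∀ m, m ≤ t → MeasurableSet (B m))
    (hBmono : ∀ m, m < t → B (m + 1) ⊆ B m)
    (hB0 : P (B 0) = 1)
    (hBt : 0 < P (B t))
    (𝒲 : ℕ → MeasurableSpace Ω)
    (h𝒲le : ∀ m, 1 ≤ m → m ≤ t → 𝒲 m ≤ inst)
    (h𝒲mono : ∀ m, 1 ≤ m → m < t → 𝒲 m ≤ 𝒲 (m + 1))
    (ε : ℝ) (hε : 0 < ε)
    (p : ℕ → Ω → ℝ)
    (hpmeas : ∀ m, 1 ≤ m → m ≤ t → Measurable[𝒲 m] (p m))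
    (hpver : ∀ m, 1 ≤ m → m ≤ t →
      p m =ᵐ[P[|B (m - 1)]] (P[|B (m - 1)])[(B m).indicator (fun _ => (1 : ℝ))|𝒲 m])
    (hppos : ∀ m, 1 ≤ m → m ≤ t → ∀ᵐ ω ∂P, ε ≤ p m ω)
    (g : ℕ → Ω → ℝ)
    (hg : ∀ m ω, g m ω = ∏ s ∈ Finset.Icc 1 m, p s ω)
    (Y : ℕ → Ω → ℝ)
    (hYint : ∀ s, s ≤ t → Integrable (Y s) P)
    (Q : ℕ → ℕ → ℕ → Ω → ℝ)
    (hQtop : ∀ k, 1 ≤ k → k ≤ t → ∀ j, (j = k - 1 ∨ j = k) → Q j k (k + 1) = Y j)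
    (hQmeas : ∀ k, 1 ≤ k → k ≤ t → ∀ j, (j = k - 1 ∨ j = k) →
      ∀ m, 1 ≤ m → m ≤ k → Measurable[𝒲 m] (Q j k m))
    (hQver : ∀ k, 1 ≤ k → k ≤ t → ∀ j, (j = k - 1 ∨ j = k) →
      ∀ m, 1 ≤ m → m ≤ k → Q j k m =ᵐ[P[|B m]] (P[|B m])[Q j k (m + 1)|𝒲 m])
    (phat : ℕ → Ω → ℝ)
    (hphatmeas : ∀ m, 1 ≤ m → m ≤ t → Measurable[𝒲 m] (phat m))
    (hphatbd : ∀ m, 1 ≤ m → m ≤ t → ∀ᵐ ω ∂P, ε ≤ phat m ω ∧ phat m ω ≤ 1)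
    (ghat : ℕ → Ω → ℝ)
    (hghat : ∀ m ω, ghat m ω = ∏ s ∈ Finset.Icc 1 m, phat s ω)
    (Qhat : ℕ → ℕ → ℕ → Ω → ℝ)
    (hQhattop : ∀ k, 1 ≤ k → k ≤ t → ∀ j, (j = k - 1 ∨ j = k) → Qhat j k (k + 1) = Y j)
    (hQhatmeas : ∀ k, 1 ≤ k → k ≤ t → ∀ j, (j = k - 1 ∨ j = k) →
      ∀ m, 1 ≤ m → m ≤ k → Measurable[𝒲 m] (Qhat j k m))
    (hQhatbd : ∀ k, 1 ≤ k → k ≤ t → ∀ j, (j = k - 1 ∨ j = k) →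
      ∀ m, 1 ≤ m → m ≤ k → ∃ C, ∀ ω, |Qhat j k m ω| ≤ C)
    (m₀ : ℕ → ℕ) (hm₀ : ∀ k, 1 ≤ k → k ≤ t → m₀ k ≤ k)
    (hpcorrect : ∀ k, 1 ≤ k → k ≤ t →
      ∀ m, 1 ≤ m → m ≤ m₀ k → phat m =ᵐ[P[|B (m - 1)]] p m)
    (hQcorrect : ∀ k, 1 ≤ k → k ≤ t → ∀ j, (j = k - 1 ∨ j = k) →
      ∀ m, m₀ k < m → m ≤ k → Qhat j k m =ᵐ[P[|B (m - 1)]] Q j k m) :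
    ∫ ω, (Y 0 ω + ∑ k ∈ Finset.Icc 1 t,
        (((∑ m ∈ Finset.Icc 1 k, (B m).indicator
            (fun ω' => (ghat m ω')⁻¹ * (Qhat k k (m + 1) ω' - Qhat k k m ω')) ω)
          + Qhat k k 1 ω)
        - ((∑ m ∈ Finset.Icc 1 k, (B m).indicator
            (fun ω' => (ghat m ω')⁻¹ * (Qhat (k - 1) k (m + 1) ω' - Qhat (k - 1) k m ω')) ω)
          + Qhat (k - 1) k 1 ω))) ∂P
    = (∫ ω, Y 0 ω ∂P)
      + ∑ k ∈ Finset.Icc 1 t, ((∫ ω, Q k k 1 ω ∂P) - ∫ ω, Q (k - 1) k 1 ω ∂P) :=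
  multiple_robustness_psi_general (inst := inst) P t B hBmeas hBmono hB0 𝒲 h𝒲le h𝒲mono ε hε p hpmeas
    hpver hppos Y hYint Q hQtop hQmeas hQver phat hphatmeas hphatbd ghat hghat Qhat hQhattop
    hQhatmeas hQhatbd m₀ hm₀ hpcorrect hQcorrect
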